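/- arXiv:1104.2222 — 2 statements merged into one kernel-verified Lean document; each statement's English description precedes it below -/
import Mathlib

section
/- Let A be a commutative ring. If a ∈ W(A) has only finitely many nonzero coefficients (no nilpotency assumption) and x ∈ Ŵ(A) (all coefficients nilpotent, finitely many nonzero), then T_a(x) = Σ_{r≥0} V^r([a_r]·x) lies in Ŵ(A). -/
/-!
Since `a` has only finitely many nonzero coefficients, `T_a(x)` is the finite sum of the Witt
vectors `V^r([a_r] · x)`, and each of these lies in `Ŵ(A)` because `[a] · x = (a ^ p ^ n * x_n)_n`.
So everything rests on `Ŵ(A)` being closed under addition, i.e. on the Witt addition polynomials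
being isobaric when `X_n` has weight `p ^ n`: if the coefficients of `y` and `z` lie in a finitely
generated nil ideal `I` and vanish from index `L` on, then `(y + z)_n ∈ I ^ ⌈p ^ n / p ^ L⌉`,
which is `0` for large `n`. To see this, multiply by the Teichmüller lift of a polynomial
variable `X`: this turns `y` into `(y_n X ^ p ^ n)_n`, and the polynomials whose `j`-th
coefficient lies in `I ^ ⌈j / w⌉` form a subring of `A[X]`.
-/

open WittVector

/-- The `T`-map `T_a(x) = Σ_{r≥0} V^r([a_r]·x)`, defined coefficientwise. -/
noncomputable def Tmap (p : ℕ) [hp : Fact p.Prime] {R : Type*} [CommRing R]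
    (a x : WittVector p R) : WittVector p R :=
  WittVector.mk p fun n =>
    (∑ r ∈ Finset.range (n + 1),
      (WittVector.verschiebung)^[r] (WittVector.teichmuller p (a.coeff r) * x)).coeff n

/-- Membership in the formal completion `Ŵ(A)` of the Witt ring. -/
def InWhat (p : ℕ) {A : Type*} [CommRing A] (a : WittVector p A) : Prop :=
  (∀ i, IsNilpotent (a.coeff i)) ∧ ∃ M : ℕ, ∀ i, M ≤ i → a.coeff i = 0

theorem Nat.add_ceilDiv_le (a b w : ℕ) : (a + b) ⌈/⌉ w ≤ a ⌈/⌉ w + b ⌈/⌉ w := by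
  rcases w.eq_zero_or_pos with rfl | hw
  · simp
  rw [ceilDiv_le_iff_le_smul hw, smul_add]
  exact add_le_add (le_smul_ceilDiv hw) (le_smul_ceilDiv hw)

namespace Polynomial

variable {A : Type*} [CommRing A]

def powCeilDivSubring (I : Ideal A) (w : ℕ) : Subring A[X] where
  carrier := {q | ∀ j, q.coeff j ∈ I ^ (j ⌈/⌉ w)}
  zero_mem' _ := by simp
  one_mem' j := by
    rcases j with _ | j
    · simp [Ideal.one_eq_top]
    · simp [coeff_one]
  add_mem' hq₁ hq₂ j := by
    rw [coeff_add]
    exact add_mem (hq₁ j) (hq₂ j)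
  neg_mem' hq j := by
    rw [coeff_neg]
    exact neg_mem (hq j)
  mul_mem' {q₁ q₂} hq₁ hq₂ j := by
    rw [coeff_mul]
    refine Ideal.sum_mem _ fun c hc => ?_
    rw [← Finset.HasAntidiagonal.mem_antidiagonal.mp hc]
    refine Ideal.pow_le_pow_right (Nat.add_ceilDiv_le _ _ _) ?_
    rw [pow_add]
    exact Ideal.mul_mem_mul (hq₁ c.1) (hq₂ c.2)

theorem C_mul_X_pow_mem_powCeilDivSubring {I : Ideal A} {w : ℕ} {c : A} {j : ℕ} :
    C c * X ^ j ∈ powCeilDivSubring I w ↔ c ∈ I ^ (j ⌈/⌉ w) := by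
  refine ⟨fun h => by simpa using h j, fun h i => ?_⟩
  rw [coeff_C_mul_X_pow]
  split_ifs with hij
  · exact hij ▸ h
  · exact zero_mem _

end Polynomial

namespace WittVector

open Polynomial

variable {p : ℕ} [hp : Fact p.Prime] {R S : Type*} [CommRing R] [CommRing S]

local notation "𝕎" => WittVector p

theorem ghostComponent_mk_pow_mul (a : R) (x : 𝕎 R) (n : ℕ) :
    ghostComponent n (mk p fun i => a ^ p ^ i * x.coeff i) = a ^ p ^ n * ghostComponent n x := by
  simp only [ghostComponent_apply, aeval_wittPolynomial, Finset.mul_sum, coeff_mk]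
  refine Finset.sum_congr rfl fun i hi => ?_
  rw [mul_pow, ← pow_mul, ← pow_add, Nat.add_sub_cancel' (Finset.mem_range_succ_iff.mp hi)]
  ring

theorem map_mk_pow_mul (f : R →+* S) (a : R) (x : 𝕎 R) :
    map f (mk p fun n => a ^ p ^ n * x.coeff n) =
      mk p fun n => f a ^ p ^ n * (map f x).coeff n := by
  ext n
  simp [map_coeff]

theorem teichmuller_mul_eq_mk_of_invertible [Invertible (p : R)] (a : R) (x : 𝕎 R) :
    teichmuller p a * x = mk p fun n => a ^ p ^ n * x.coeff n := by
  apply (ghostMap.bijective_of_invertible p R).1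
  funext n
  simp [ghostMap_apply, ghostComponent_teichmuller, ghostComponent_mk_pow_mul]

theorem teichmuller_mul_eq_mk (a : R) (x : 𝕎 R) :
    teichmuller p a * x = mk p fun n => a ^ p ^ n * x.coeff n := by
  -- The universal case over `ℤ`-polynomials embeds into `ℚ`-polynomials, where `p` is invertible.
  have universal (b : MvPolynomial R ℤ) (y : 𝕎 (MvPolynomial R ℤ)) :
      teichmuller p b * y = mk p fun n => b ^ p ^ n * y.coeff n := by
    refine map_injective (MvPolynomial.map (Int.castRingHom ℚ))
      (MvPolynomial.map_injective _ Int.cast_injective) ?_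
    rw [_root_.map_mul, map_teichmuller, map_mk_pow_mul, teichmuller_mul_eq_mk_of_invertible]
  have h := congrArg (map (MvPolynomial.counit R))
    (universal (MvPolynomial.X a) (mk p fun n => MvPolynomial.X (x.coeff n)))
  have hx : map (MvPolynomial.counit R) (mk p fun n => MvPolynomial.X (x.coeff n)) = x := by
    ext n
    simp [map_coeff]
  rwa [_root_.map_mul, map_teichmuller, map_mk_pow_mul, MvPolynomial.counit_X, hx] at h

theorem teichmuller_mul_coeff (a : R) (x : 𝕎 R) (n : ℕ) :
    (teichmuller p a * x).coeff n = a ^ p ^ n * x.coeff n := by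
  rw [teichmuller_mul_eq_mk, coeff_mk]

variable (p) in
/-- Since `([X] * y).coeff n = y.coeff n • X ^ p ^ n`, this is the set of `y` with
`y.coeff n ∈ I ^ ⌈p ^ n / w⌉` for all `n` (`mem_weightFiltration`); as a preimage of the
Witt vectors over a subring it is closed under addition, although the Witt addition
polynomials are not linear. -/
noncomputable def weightFiltration (I : Ideal R) (w : ℕ) : AddSubgroup (𝕎 R) :=
  (map (powCeilDivSubring I w).subtype).range.toAddSubgroup.comap
    ((AddMonoidHom.mulLeft (teichmuller p X)).comp (map (C : R →+* R[X])).toAddMonoidHom)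

theorem mem_weightFiltration {I : Ideal R} {w : ℕ} {y : 𝕎 R} :
    y ∈ weightFiltration p I w ↔ ∀ n, y.coeff n ∈ I ^ (p ^ n ⌈/⌉ w) := by
  have coeff_eq (n : ℕ) : (teichmuller p X * map C y).coeff n = C (y.coeff n) * X ^ p ^ n := by
    rw [teichmuller_mul_coeff, map_coeff, mul_comm]
  simp only [weightFiltration, AddSubgroup.mem_comap, AddMonoidHom.coe_comp,
    AddMonoidHom.coe_mulLeft, RingHom.toAddMonoidHom_eq_coe, AddMonoidHom.coe_coe,
    Function.comp_apply, Subring.mem_toAddSubgroup, RingHom.mem_range]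
  constructor
  · rintro ⟨u, hu⟩ n
    rw [← C_mul_X_pow_mem_powCeilDivSubring, ← coeff_eq, ← hu, map_coeff]
    exact (u.coeff n).2
  · intro h
    refine ⟨mk p fun n => ⟨_, C_mul_X_pow_mem_powCeilDivSubring.mpr (h n)⟩, ?_⟩
    ext n
    simp [map_coeff, coeff_eq]

theorem mem_weightFiltration_pow_of_coeff_mem {I : Ideal R} {L : ℕ} {y : 𝕎 R}
    (hI : ∀ n, y.coeff n ∈ I) (hL : ∀ n, L ≤ n → y.coeff n = 0) :
    y ∈ weightFiltration p I (p ^ L) := by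
  refine mem_weightFiltration.mpr fun n => ?_
  rcases le_or_gt L n with hn | hn
  · rw [hL n hn]
    exact zero_mem _
  · have hle : p ^ n ⌈/⌉ p ^ L ≤ 1 := by
      rw [ceilDiv_le_iff_le_smul (pow_pos hp.out.pos L), smul_eq_mul, mul_one]
      exact Nat.pow_le_pow_right hp.out.pos hn.le
    exact Ideal.pow_le_pow_right hle (by simpa using hI n)

theorem coeff_eq_zero_of_mem_weightFiltration {I : Ideal R} {w k n : ℕ} {y : 𝕎 R}
    (hy : y ∈ weightFiltration p I w) (hw : 0 < w) (hk : I ^ k = ⊥) (hn : k * w ≤ n) :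
    y.coeff n = 0 := by
  have hkn : k ≤ p ^ n ⌈/⌉ w := by
    rw [Nat.ceilDiv_eq_add_pred_div, Nat.le_div_iff_mul_le hw]
    have := (Nat.lt_pow_self hp.out.one_lt : n < p ^ n)
    omega
  simpa [hk] using Ideal.pow_le_pow_right hkn (mem_weightFiltration.mp hy n)

theorem coeff_sum_range_eq_of_lt {f : ℕ → 𝕎 R} (hf : ∀ r i, i < r → (f r).coeff i = 0)
    {n K : ℕ} (hK : n < K) :
    (∑ r ∈ Finset.range K, f r).coeff n = (∑ r ∈ Finset.range (n + 1), f r).coeff n := by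
  rw [← coeff_truncate _ ⟨n, n.lt_succ_self⟩, ← coeff_truncate _ ⟨n, n.lt_succ_self⟩, map_sum,
    map_sum, ← Finset.sum_subset (Finset.range_subset_range.mpr hK)]
  intro r _ hr
  ext i
  rw [coeff_truncate, hf r i (i.2.trans_le (by simpa using hr)), TruncatedWittVector.coeff_zero]

end WittVector

theorem InWhat.exists_fg_ideal {p : ℕ} {A : Type*} [CommRing A] {y : WittVector p A}
    (hy : InWhat p y) :
    ∃ I : Ideal A, I.FG ∧ I ≤ nilradical A ∧ ∀ n, y.coeff n ∈ I := by
  classical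
  obtain ⟨L, hL⟩ := hy.2
  refine ⟨Ideal.span ((Finset.range L).image y.coeff), ⟨_, rfl⟩, ?_, fun n => ?_⟩
  · rw [Ideal.span_le]
    intro c hc
    obtain ⟨n, -, rfl⟩ := Finset.mem_image.mp hc
    exact hy.1 n
  · rcases lt_or_ge n L with hn | hn
    · exact Ideal.subset_span (Finset.mem_image_of_mem _ (Finset.mem_range.mpr hn))
    · rw [hL n hn]
      exact zero_mem _

section InWhat

variable {p : ℕ} [hp : Fact p.Prime] {A : Type*} [CommRing A]

theorem InWhat.zero : InWhat p (0 : WittVector p A) :=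
  ⟨fun _ => by simp, 0, fun _ _ => by simp⟩

theorem InWhat.of_mem_weightFiltration {I : Ideal A} {w : ℕ} {y : WittVector p A}
    (hI : IsNilpotent I) (hw : 0 < w) (hy : y ∈ weightFiltration p I w) : InWhat p y := by
  obtain ⟨k, hk⟩ := hI
  refine ⟨fun n => ⟨k, ?_⟩, k * w, fun n => coeff_eq_zero_of_mem_weightFiltration hy hw hk⟩
  have hpos : p ^ n ⌈/⌉ w ≠ 0 := by
    rw [Ne, ← Nat.le_zero, ceilDiv_le_iff_le_smul hw, smul_zero, Nat.le_zero]
    exact (pow_pos hp.out.pos n).ne'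
  have hyI : y.coeff n ∈ I := Ideal.pow_le_self hpos (mem_weightFiltration.mp hy n)
  simpa [hk] using Ideal.pow_mem_pow hyI k

theorem InWhat.add {y z : WittVector p A} (hy : InWhat p y) (hz : InWhat p z) :
    InWhat p (y + z) := by
  obtain ⟨I, hIfg, hInil, hyI⟩ := hy.exists_fg_ideal
  obtain ⟨J, hJfg, hJnil, hzJ⟩ := hz.exists_fg_ideal
  obtain ⟨L, hyL⟩ := hy.2
  obtain ⟨L', hzL⟩ := hz.2
  have hnil : IsNilpotent (I ⊔ J) :=
    (Ideal.FG.isNilpotent_iff_le_nilradical (Submodule.FG.sup hIfg hJfg)).mpr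
      (sup_le hInil hJnil)
  refine .of_mem_weightFiltration hnil (pow_pos hp.out.pos (max L L')) (add_mem ?_ ?_)
  · exact mem_weightFiltration_pow_of_coeff_mem (fun n => Ideal.mem_sup_left (hyI n))
      fun n hn => hyL n (le_of_max_le_left hn)
  · exact mem_weightFiltration_pow_of_coeff_mem (fun n => Ideal.mem_sup_right (hzJ n))
      fun n hn => hzL n (le_of_max_le_right hn)

theorem InWhat.teichmuller_mul (a : A) {x : WittVector p A} (hx : InWhat p x) :
    InWhat p (teichmuller p a * x) := by
  obtain ⟨hnil, M, hM⟩ := hx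
  refine ⟨fun n => ?_, M, fun n hn => ?_⟩ <;> rw [teichmuller_mul_coeff]
  · exact (Commute.all _ _).isNilpotent_mul_left (hnil n)
  · rw [hM n hn, mul_zero]

theorem InWhat.verschiebung {x : WittVector p A} (hx : InWhat p x) :
    InWhat p (verschiebung x) := by
  obtain ⟨hnil, M, hM⟩ := hx
  refine ⟨fun n => ?_, M + 1, fun n hn => ?_⟩
  · rcases n with _ | n
    · simp
    · simpa using hnil n
  · obtain ⟨m, rfl⟩ : ∃ m, n = m + 1 := ⟨n - 1, by omega⟩
    rw [verschiebung_coeff_succ, hM m (by omega)]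

end InWhat

theorem Tmap_eq_sum {p : ℕ} [Fact p.Prime] {R : Type*} [CommRing R] {a : WittVector p R}
    {M : ℕ} (hM : ∀ i, M ≤ i → a.coeff i = 0) (x : WittVector p R) :
    Tmap p a x = ∑ r ∈ Finset.range M, verschiebung^[r] (teichmuller p (a.coeff r) * x) := by
  set f := fun r => verschiebung^[r] (teichmuller p (a.coeff r) * x)
  have hf (r i : ℕ) (h : i < r) : (f r).coeff i = 0 := iterate_verschiebung_coeff_eq_zero _ h
  ext n
  have hsum : ∑ r ∈ Finset.range M, f r = ∑ r ∈ Finset.range (max (n + 1) M), f r := by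
    refine Finset.sum_subset (Finset.range_subset_range.mpr (le_max_right _ _)) fun r _ hr => ?_
    simp [f, hM r (by simpa using hr), iterate_map_zero]
  rw [Tmap, coeff_mk, hsum, coeff_sum_range_eq_of_lt hf (lt_max_of_lt_left n.lt_succ_self)]

theorem stmt4 (p : ℕ) [hp : Fact p.Prime] (A : Type*) [CommRing A]
    (a x : WittVector p A) (ha : ∃ M : ℕ, ∀ i, M ≤ i → a.coeff i = 0)
    (hx : InWhat p x) : InWhat p (Tmap p a x) := by
  obtain ⟨M, hM⟩ := ha
  rw [Tmap_eq_sum hM]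
  exact Finset.sum_induction _ (InWhat p) (fun _ _ => InWhat.add) InWhat.zero
    fun r _ => Function.Iterate.rec (InWhat p) (hx.teichmuller_mul _)
      (fun _ => InWhat.verschiebung) r
end

section
/- Let O = Z[C, Λ]/(p − C·Λ^{p−1}) and let c, λ be the images of C, Λ. Then there exists a unique Witt vector d = (d_0, d_1, d_2, ...) ∈ W(O) with d_0 = c and d_1 = 1 − p^{p−1}, such that p·[λ] = (λ^p d_0, λ^p d_1, λ^p d_2, ...) in W(O), i.e. every coordinate of the Witt vector p·[λ] is divisible by λ^p and d is the vector of quotients. -/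
/-!
Multiplying a Witt vector by a Teichmüller lift `[r]` multiplies its `n`-th coordinate by
`r ^ p ^ n`; this is a universal identity, checked on ghost components over `ℚ`-polynomial
rings. Since `p = (p, 1 - p ^ (p - 1), …)` and `p = c λ ^ (p - 1)` in `O`, the coordinates of
`p · [λ]` are `c λ ^ p` and `pₙ λ ^ p ^ n` for `n ≥ 1`, all divisible by `λ ^ p`. The quotient is
unique because `λ` is a nonzerodivisor in `O`: the prime `Λ` of `ℤ[C, Λ]` does not divide
`p - C Λ ^ (p - 1)`.
-/

open MvPolynomial

/-- The ring `O = ℤ[C,Λ]/(p − C·Λ^{p−1})`, with `C = X 0` and `Λ = X 1`. -/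
noncomputable abbrev ORing (p : ℕ) : Type :=
  MvPolynomial (Fin 2) ℤ ⧸
    Ideal.span {(p : MvPolynomial (Fin 2) ℤ) - X 0 * X 1 ^ (p - 1)}

/-- The image `c` of `C` in `O`. -/
noncomputable abbrev cO (p : ℕ) : ORing p := Ideal.Quotient.mk _ (X 0)

/-- The image `λ` of `Λ` in `O`. -/
noncomputable abbrev lamO (p : ℕ) : ORing p := Ideal.Quotient.mk _ (X 1)

theorem Prime.dvd_of_dvd_mul_of_not_dvd {R : Type*} [CommRing R] [IsDomain R] {π g f : R}
    (hπ : Prime π) (hg : ¬π ∣ g) (h : g ∣ π * f) : g ∣ f := by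
  obtain ⟨k, hk⟩ := h
  obtain ⟨l, rfl⟩ : π ∣ k := (hπ.dvd_or_dvd (hk ▸ dvd_mul_right π f)).resolve_left hg
  exact ⟨l, mul_left_cancel₀ hπ.ne_zero (by rw [hk]; ring)⟩

theorem Prime.isLeftRegular_mk_span_singleton {R : Type*} [CommRing R] [IsDomain R] {π g : R}
    (hπ : Prime π) (hg : ¬π ∣ g) : IsLeftRegular (Ideal.Quotient.mk (Ideal.span {g}) π) := by
  intro a b hab
  obtain ⟨a, rfl⟩ := Ideal.Quotient.mk_surjective a
  obtain ⟨b, rfl⟩ := Ideal.Quotient.mk_surjective b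
  simp only [← map_mul, Ideal.Quotient.mk_eq_mk_iff_sub_mem, Ideal.mem_span_singleton,
    ← mul_sub] at hab ⊢
  exact hπ.dvd_of_dvd_mul_of_not_dvd hg hab

namespace WittVector

variable {p : ℕ} [Fact p.Prime] {R : Type*} [CommRing R]

theorem mul_teichmuller_of_invertible [Invertible (p : R)] (x : WittVector p R) (r : R) :
    x * teichmuller p r = mk p fun n => x.coeff n * r ^ p ^ n := by
  apply (ghostMap.bijective_of_invertible p R).injective
  funext n
  rw [ghostMap_apply, ghostMap_apply, map_mul, ghostComponent_teichmuller]
  simp only [ghostComponent_apply, aeval_wittPolynomial, coeff_mk, Finset.sum_mul]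
  refine Finset.sum_congr rfl fun i hi => ?_
  rw [mul_pow, ← pow_mul, ← pow_add, Nat.add_sub_cancel' (Finset.mem_range_succ_iff.mp hi),
    mul_assoc]

theorem coeff_mul_teichmuller_of_intPolynomial {σ : Type*}
    (x : WittVector p (MvPolynomial σ ℤ)) (r : MvPolynomial σ ℤ) (n : ℕ) :
    (x * teichmuller p r).coeff n = x.coeff n * r ^ p ^ n := by
  apply MvPolynomial.map_injective (Int.castRingHom ℚ) Int.cast_injective
  rw [← map_coeff, map_mul, map_teichmuller, mul_teichmuller_of_invertible, coeff_mk, map_mul,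
    map_pow, map_coeff]

theorem coeff_mul_teichmuller (x : WittVector p R) (r : R) (n : ℕ) :
    (x * teichmuller p r).coeff n = x.coeff n * r ^ p ^ n := by
  obtain ⟨x, rfl⟩ := map_surjective _ (counit_surjective R) x
  obtain ⟨r, rfl⟩ := counit_surjective R r
  rw [← map_teichmuller, ← map_mul, map_coeff, map_coeff, coeff_mul_teichmuller_of_intPolynomial,
    map_mul, map_pow]

theorem natCast_self_coeff_zero : ((p : ℕ) : WittVector p R).coeff 0 = p :=
  map_natCast (constantCoeff (p := p) (R := R)) p

theorem natCast_coeff_eq_map (m n : ℕ) :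
    ((m : ℕ) : WittVector p R).coeff n =
      Int.castRingHom R (((m : ℕ) : WittVector p ℤ).coeff n) := by
  rw [← map_coeff, map_natCast]

-- The first ghost component of `p` reads `p ^ p + p * p₁ = p`.
theorem natCast_self_coeff_one_int :
    ((p : ℕ) : WittVector p ℤ).coeff 1 = 1 - (p : ℤ) ^ (p - 1) := by
  have hp : p.Prime := Fact.out
  have hghost : ghostComponent 1 ((p : ℕ) : WittVector p ℤ) = p := map_natCast _ p
  simp only [ghostComponent_apply, aeval_wittPolynomial, Finset.sum_range_succ,
    Finset.sum_range_zero, natCast_self_coeff_zero, pow_zero, pow_one, one_mul, Nat.sub_self,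
    Nat.sub_zero, zero_add] at hghost
  have hpow : (p : ℤ) ^ p = p * p ^ (p - 1) := by rw [← pow_succ', Nat.sub_add_cancel hp.pos]
  refine mul_left_cancel₀ (Int.natCast_ne_zero.mpr hp.ne_zero) ?_
  linear_combination hghost - hpow

theorem natCast_self_coeff_one : ((p : ℕ) : WittVector p R).coeff 1 = 1 - (p : R) ^ (p - 1) := by
  rw [natCast_coeff_eq_map, natCast_self_coeff_one_int]
  simp

variable (p) in
/-- Given `p = c * l ^ (p - 1)`, the quotient of `p * teichmuller p l` by `l ^ p`. -/
noncomputable def natCastMulTeichmullerDivPow (c l : R) : WittVector p R :=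
  mk p fun n => if n = 0 then c else ((p : ℕ) : WittVector p R).coeff n * l ^ (p ^ n - p)

theorem natCastMulTeichmullerDivPow_coeff_zero (c l : R) :
    (natCastMulTeichmullerDivPow p c l).coeff 0 = c := by
  simp [natCastMulTeichmullerDivPow]

theorem natCastMulTeichmullerDivPow_coeff_one (c l : R) :
    (natCastMulTeichmullerDivPow p c l).coeff 1 = 1 - (p : R) ^ (p - 1) := by
  simp [natCastMulTeichmullerDivPow, natCast_self_coeff_one]

theorem natCast_mul_teichmuller_coeff {c l : R} (h : (p : R) = c * l ^ (p - 1)) (n : ℕ) :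
    ((p : WittVector p R) * teichmuller p l).coeff n =
      l ^ p * (natCastMulTeichmullerDivPow p c l).coeff n := by
  rw [coeff_mul_teichmuller, natCastMulTeichmullerDivPow, coeff_mk]
  rcases n with _ | n
  · rw [natCast_self_coeff_zero, h, if_pos rfl, pow_zero, pow_one, mul_assoc,
      pow_sub_one_mul (Fact.out : p.Prime).ne_zero, mul_comm]
  · rw [if_neg n.succ_ne_zero, mul_left_comm, ← pow_add,
      Nat.add_sub_cancel' (Nat.le_self_pow n.succ_ne_zero p)]

end WittVector

theorem natCast_eq_cO_mul_lamO_pow (p : ℕ) : (p : ORing p) = cO p * lamO p ^ (p - 1) := by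
  rw [← map_natCast (Ideal.Quotient.mk _), ← map_pow, ← map_mul,
    Ideal.Quotient.mk_eq_mk_iff_sub_mem]
  exact Ideal.mem_span_singleton_self _

theorem isLeftRegular_lamO (p : ℕ) [hp : Fact p.Prime] : IsLeftRegular (lamO p) := by
  refine X_prime.isLeftRegular_mk_span_singleton fun hdvd => hp.out.ne_zero ?_
  have hdvd_p : (X 1 : MvPolynomial (Fin 2) ℤ) ∣ (p : MvPolynomial (Fin 2) ℤ) := by
    simpa using dvd_add hdvd
      (dvd_mul_of_dvd_right (dvd_pow_self _ (Nat.sub_ne_zero_of_lt hp.out.one_lt)) (X 0))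
  simpa using map_dvd (eval 0) hdvd_p

theorem stmt15 (p : ℕ) [hp : Fact p.Prime] :
    ∃! d : WittVector p (ORing p),
      d.coeff 0 = cO p ∧
      d.coeff 1 = 1 - (p : ORing p) ^ (p - 1) ∧
      ∀ n, ((p : WittVector p (ORing p)) *
              WittVector.teichmuller p (lamO p)).coeff n =
            lamO p ^ p * d.coeff n := by
  have hcoeff := WittVector.natCast_mul_teichmuller_coeff (natCast_eq_cO_mul_lamO_pow p)
  refine ⟨WittVector.natCastMulTeichmullerDivPow p (cO p) (lamO p),
    ⟨WittVector.natCastMulTeichmullerDivPow_coeff_zero _ _,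
      WittVector.natCastMulTeichmullerDivPow_coeff_one _ _, hcoeff⟩, ?_⟩
  rintro d ⟨-, -, hd⟩
  exact WittVector.ext fun n => (isLeftRegular_lamO p).pow p ((hd n).symm.trans (hcoeff n))
end
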